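/- For the Hard-Soft Constraints instance of the Minimum Relaxation Problem with cost w_R(o, o) = w_T(x) if o ∈ L(A_H) ∩ L(A_S), and M + w_T(x) if o ∈ L(A_H) \ L(A_S) (where x generates o): if M exceeds the maximum weight over all simple trajectories of T and some trajectory of T has output in L(A_H) ∩ L(A_S) with a simple minimizer, then every optimal solution of the minimum relaxation problem has output word satisfying both the hard and the soft specification. -/

import Mathlib

open scoped Classical

/-- Weight of a trajectory: sum of the transition weights of consecutive states. -/
def pathWeight {X : Type*} (w : X → X → ℝ) : List X → ℝ
  | [] => 0
  | [_] => 0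
  | x :: y :: rest => w x y + pathWeight w (y :: rest)

/-- A (finite) trajectory of the transition system. -/
def Traj {X : Type*} (δT : X → X → Prop) (x0 : X) (xs : List X) : Prop :=
  xs.head? = some x0 ∧ xs.Chain' δT

/-- The hard–soft relaxation cost: `w_T(x)` if the output satisfies the soft spec,
`M + w_T(x)` otherwise. -/
noncomputable def hscCost {X α σS : Type*} (h : X → α) (AS : DFA α σS)
    (wT : X → X → ℝ) (M : ℝ) (x : List X) : ℝ :=
  if x.map h ∈ AS.accepts then pathWeight wT x else M + pathWeight wT x


lemma pathWeight_nonneg {X : Type*} (δT : X → X → Prop) (wT : X → X → ℝ)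
    (hpos : ∀ u v, δT u v → 0 < wT u v) :
    ∀ xs : List X, xs.Chain' δT → 0 ≤ pathWeight wT xs := by
  intro xs
  induction xs with
  | nil => intro _; simp [pathWeight]
  | cons a t ih =>
    intro hc
    cases t with
    | nil => simp [pathWeight]
    | cons b r =>
      simp only [List.Chain', List.isChain_cons_cons] at hc
      have h1 := hpos a b hc.1
      have h2 := ih hc.2
      simp only [pathWeight]
      linarith

/-- For the Hard–Soft Constraints instance of the Minimum Relaxation Problem
(cost `w_T(x)` if `o ∈ L(A_H) ∩ L(A_S)`, and `M + w_T(x)` if `o ∈ L(A_H) \ L(A_S)`): if `M`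
exceeds the maximum weight over simple trajectories of `T` (with strictly positive weights)
and some trajectory with output in `L(A_H) ∩ L(A_S)` is a simple minimizer, then every optimal
solution of the minimum relaxation problem satisfies both the hard and the soft spec. -/
theorem hsc_optimal_satisfies_soft {X α σH σS : Type*}
    (δT : X → X → Prop) (x0 : X) (h : X → α) (wT : X → X → ℝ)
    (AH : DFA α σH) (AS : DFA α σS) (M : ℝ)
    (hpos : ∀ u v, δT u v → 0 < wT u v)
    (hM : ∀ y : List X, Traj δT x0 y → y.Nodup → pathWeight wT y < M)
    (hfeas : ∃ xstar : List X, Traj δT x0 xstar ∧ xstar.Nodup ∧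
      xstar.map h ∈ AH.accepts ∧ xstar.map h ∈ AS.accepts ∧
      ∀ y : List X, Traj δT x0 y → y.map h ∈ AH.accepts → y.map h ∈ AS.accepts →
        pathWeight wT xstar ≤ pathWeight wT y)
    (x : List X)
    (hxfeas : Traj δT x0 x ∧ x.map h ∈ AH.accepts)
    (hxopt : ∀ y : List X, Traj δT x0 y → y.map h ∈ AH.accepts →
      hscCost h AS wT M x ≤ hscCost h AS wT M y) :
    x.map h ∈ AS.accepts := by
  by_contra hns
  obtain ⟨xs, htraj, hnd, hH, hS, hmin⟩ := hfeas
  have hopt := hxopt xs htraj hH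
  have hxw : 0 ≤ pathWeight wT x := pathWeight_nonneg δT wT hpos x hxfeas.1.2
  have hlt : pathWeight wT xs < M := hM xs htraj hnd
  rw [hscCost, hscCost, if_pos hS, if_neg hns] at hopt
  linarith
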